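/- arXiv:2007.08923 — 5 statements merged into one kernel-verified Lean document; each statement's English description precedes it below -/
import Mathlib

section
/- Let s ≥ 0 and β ∈ ℝ. There exists C > 0 (depending only on s and β) such that for all t, α ∈ ℝ, all M ≥ 1, and all measurable f, g : ℝ → ℂ with ‖f‖_{L²_s}, ‖g‖_{L²_s} < ∞, the function F(ξ) = ∫_ℝ 1{|Φ_β(ξ, ξ₁, ξ − ξ₁) − α| ≤ M} · (iξ) · exp(i t Φ_β(ξ, ξ₁, ξ − ξ₁)) · f(ξ₁) · g(ξ − ξ₁) dξ₁ satisfies ‖F‖_{L²_s} ≤ C · M^{1/2} · ‖f‖_{L²_s} ‖g‖_{L²_s}. -/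
open MeasureTheory

/-- The Kawahara modulation function. -/
noncomputable def Phi (β ξ ξ₁ ξ₂ : ℝ) : ℝ :=
  ξ₁ ^ 5 + ξ₂ ^ 5 - ξ ^ 5 + β * (ξ₁ ^ 3 + ξ₂ ^ 3 - ξ ^ 3)

/-- The weighted norm `‖f‖_{L²_s} = (∫ ⟨ξ⟩^{2s} |f(ξ)|² dξ)^{1/2}`, with `⟨ξ⟩^{2s} = (1+ξ²)^s`. -/
noncomputable def wnorm (s : ℝ) (f : ℝ → ℂ) : ℝ :=
  (∫ ξ : ℝ, (1 + ξ ^ 2) ^ s * ‖f ξ‖ ^ 2) ^ ((1 : ℝ) / 2)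

/-!
Peetre's inequality `⟨ξ⟩^s ≤ 2^{s/2} ⟨ξ₁⟩^s ⟨ξ - ξ₁⟩^s` reduces the estimate to `s = 0` for
`φ = ⟨·⟩^s |f|` and `ψ = ⟨·⟩^s |g|`: the `L²(dξ)` norm of `∫ |ξ| φ(ξ₁) ψ(ξ - ξ₁) dξ₁`, taken over
`|Φ - α| ≤ M`, is to be bounded by `M^{1/2} ‖φ‖₂ ‖ψ‖₂`.

Along the slices the derivatives of `Φ` factor (`ξ₂ = ξ - ξ₁`):
`∂_{ξ₁} Φ = ξ (2ξ₁ - ξ) (5(ξ₁² + ξ₂²) + 3β)` and `∂_ξ Φ = ξ₁ (ξ₁ - 2ξ) (5(ξ₂² + ξ²) + 3β)`,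
and a sublevel set `{|h - α| ≤ M}` of a function with `|h'| ≥ m` on an interval has length at
most `2M / m`.
* If `|ξ| ≥ 3 + |β|` and `|2ξ₁ - ξ| ≥ 1`, then `|∂_{ξ₁} Φ| ≥ |ξ|³`, so the `ξ₁`-slice has length
  `≲ M / |ξ|³`, and Cauchy–Schwarz in `ξ₁` concludes.
* Otherwise `ξ` is bounded or `ξ ≈ 2ξ₁`, where `|∂_ξ Φ| ≥ ξ₁⁴` for large `ξ₁`; so every
  `ξ`-slice carries `∫ ξ² dξ ≲ 1 + M`, and Cauchy–Schwarz with `|ξ|` put on `φ`, followed by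
  Tonelli, concludes.
-/

open ENNReal Set

theorem ENNReal.add_sq_le_two_mul (a b : ℝ≥0∞) : (a + b) ^ 2 ≤ 2 * (a ^ 2 + b ^ 2) := by
  have h := ENNReal.rpow_add_le_mul_rpow_add_rpow a b (p := 2) one_le_two
  norm_num at h
  exact_mod_cast h

theorem ENNReal.lintegral_mul_sq_le {α : Type*} [MeasurableSpace α] {μ : Measure α}
    {f g : α → ℝ≥0∞} (hf : AEMeasurable f μ) (hg : AEMeasurable g μ) :
    (∫⁻ a, f a * g a ∂μ) ^ 2 ≤ (∫⁻ a, f a ^ 2 ∂μ) * ∫⁻ a, g a ^ 2 ∂μ := by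
  have h := ENNReal.lintegral_mul_le_Lp_mul_Lq μ Real.HolderConjugate.two_two hf hg
  simp only [ENNReal.rpow_two] at h
  calc (∫⁻ a, f a * g a ∂μ) ^ 2
      ≤ ((∫⁻ a, f a ^ 2 ∂μ) ^ (1 / 2 : ℝ) * (∫⁻ a, g a ^ 2 ∂μ) ^ (1 / 2 : ℝ)) ^ 2 :=
        pow_le_pow_left' h 2
    _ = _ := by
        rw [mul_pow, ← ENNReal.rpow_two, ← ENNReal.rpow_two, ← ENNReal.rpow_mul,
          ← ENNReal.rpow_mul]
        norm_num

theorem setLIntegral_le_mul_measure {α : Type*} [MeasurableSpace α] {μ : Measure α} {s : Set α}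
    {f : α → ℝ≥0∞} {c : ℝ≥0∞} (h : ∀ x ∈ s, f x ≤ c) : ∫⁻ x in s, f x ∂μ ≤ c * μ s :=
  (setLIntegral_mono measurable_const h).trans_eq (setLIntegral_const s c)

theorem lintegral_lintegral_mul_sub {φ ψ : ℝ → ℝ≥0∞} (hφ : Measurable φ) (hψ : Measurable ψ) :
    ∫⁻ x, ∫⁻ y, φ y * ψ (x - y) = (∫⁻ y, φ y) * ∫⁻ y, ψ y := by
  rw [lintegral_lintegral_swap (f := fun x y => φ y * ψ (x - y)) (by fun_prop),
    ← lintegral_mul_const _ hφ]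
  congr with y
  rw [lintegral_const_mul _ (by fun_prop), lintegral_sub_right_eq_self ψ y]

theorem toReal_rpow_half_le_of_le_ofReal_mul {L A B : ℝ≥0∞} {c : ℝ} (hc : 0 ≤ c) (hA : A ≠ ⊤)
    (hB : B ≠ ⊤) (h : L ≤ ENNReal.ofReal c * (A * B)) :
    L.toReal ^ (1 / 2 : ℝ) ≤ c ^ (1 / 2 : ℝ) * A.toReal ^ (1 / 2 : ℝ) * B.toReal ^ (1 / 2 : ℝ) := by
  have h' := ENNReal.toReal_mono (by finiteness) h
  rw [toReal_mul, toReal_mul, toReal_ofReal hc] at h'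
  rw [mul_assoc, ← Real.mul_rpow toReal_nonneg toReal_nonneg, ← Real.mul_rpow hc (by positivity)]
  exact Real.rpow_le_rpow toReal_nonneg h' (by norm_num)

noncomputable def weightedConvOn (E : Set (ℝ × ℝ)) (w φ ψ : ℝ → ℝ≥0∞) (x : ℝ) : ℝ≥0∞ :=
  ∫⁻ y in Prod.mk x ⁻¹' E, w x * (φ y * ψ (x - y))

section weightedConvOn

variable {E E₁ E₂ : Set (ℝ × ℝ)} {w φ ψ : ℝ → ℝ≥0∞}

theorem lintegral_slice_eq_lintegral_indicator (hE : MeasurableSet E) {F : ℝ × ℝ → ℝ≥0∞}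
    (x : ℝ) : ∫⁻ y in Prod.mk x ⁻¹' E, F (x, y) = ∫⁻ y, E.indicator F (x, y) := by
  rw [← lintegral_indicator (measurable_prodMk_left hE)]
  rfl

theorem measurable_weightedConvOn (hE : MeasurableSet E) (hw : Measurable w) (hφ : Measurable φ)
    (hψ : Measurable ψ) : Measurable (weightedConvOn E w φ ψ) := by
  have : weightedConvOn E w φ ψ = fun x =>
      ∫⁻ y, E.indicator (fun p => w p.1 * (φ p.2 * ψ (p.1 - p.2))) (x, y) :=
    funext (lintegral_slice_eq_lintegral_indicator
      (F := fun p => w p.1 * (φ p.2 * ψ (p.1 - p.2))) hE)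
  exact this ▸ (Measurable.indicator (by fun_prop) hE).lintegral_prod_right'

theorem weightedConvOn_union_le (x : ℝ) :
    weightedConvOn (E₁ ∪ E₂) w φ ψ x ≤ weightedConvOn E₁ w φ ψ x + weightedConvOn E₂ w φ ψ x :=
  lintegral_union_le _ _ _

/-- Cauchy–Schwarz in `y` against the indicator of the slice. -/
theorem lintegral_weightedConvOn_sq_le_of_slice_volume (hφ : Measurable φ) (hψ : Measurable ψ)
    {c : ℝ≥0∞} (hrow : ∀ x, w x ^ 2 * volume (Prod.mk x ⁻¹' E) ≤ c) :
    ∫⁻ x, weightedConvOn E w φ ψ x ^ 2 ≤ c * ((∫⁻ y, φ y ^ 2) * ∫⁻ y, ψ y ^ 2) := by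
  have hpt : ∀ x, weightedConvOn E w φ ψ x ^ 2 ≤ c * ∫⁻ y, φ y ^ 2 * ψ (x - y) ^ 2 := by
    intro x
    calc weightedConvOn E w φ ψ x ^ 2
        = (∫⁻ y in Prod.mk x ⁻¹' E, 1 * (w x * (φ y * ψ (x - y)))) ^ 2 := by
          simp only [weightedConvOn, one_mul]
      _ ≤ (∫⁻ y in Prod.mk x ⁻¹' E, 1 ^ 2) *
            ∫⁻ y in Prod.mk x ⁻¹' E, (w x * (φ y * ψ (x - y))) ^ 2 :=
          ENNReal.lintegral_mul_sq_le aemeasurable_const (by fun_prop)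
      _ = w x ^ 2 * volume (Prod.mk x ⁻¹' E) *
            ∫⁻ y in Prod.mk x ⁻¹' E, φ y ^ 2 * ψ (x - y) ^ 2 := by
          simp_rw [one_pow, setLIntegral_const, one_mul, mul_pow]
          rw [lintegral_const_mul _ (by fun_prop)]
          ring
      _ ≤ c * ∫⁻ y, φ y ^ 2 * ψ (x - y) ^ 2 :=
          mul_le_mul' (hrow x) (setLIntegral_le_lintegral _ _)
  calc ∫⁻ x, weightedConvOn E w φ ψ x ^ 2
      ≤ ∫⁻ x, c * ∫⁻ y, φ y ^ 2 * ψ (x - y) ^ 2 := lintegral_mono hpt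
    _ = c * ∫⁻ x, ∫⁻ y, φ y ^ 2 * ψ (x - y) ^ 2 :=
        lintegral_const_mul _ (Measurable.lintegral_prod_right' (f := fun p : ℝ × ℝ =>
          φ p.2 ^ 2 * ψ (p.1 - p.2) ^ 2) (by fun_prop))
    _ = _ := by rw [lintegral_lintegral_mul_sub (hφ.pow_const 2) (hψ.pow_const 2)]

/-- Cauchy–Schwarz in `y` with the multiplier on `φ`, followed by Tonelli. -/
theorem lintegral_weightedConvOn_sq_le_of_slice_lintegral (hE : MeasurableSet E)
    (hw : Measurable w) (hφ : Measurable φ) (hψ : Measurable ψ) {c : ℝ≥0∞}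
    (hcol : ∀ y, ∫⁻ x in (·, y) ⁻¹' E, w x ^ 2 ≤ c) :
    ∫⁻ x, weightedConvOn E w φ ψ x ^ 2 ≤ c * ((∫⁻ y, φ y ^ 2) * ∫⁻ y, ψ y ^ 2) := by
  set G : ℝ × ℝ → ℝ≥0∞ := E.indicator fun p => w p.1 ^ 2 * φ p.2 ^ 2
  have hG : Measurable G := Measurable.indicator (by fun_prop) hE
  have hpt : ∀ x, weightedConvOn E w φ ψ x ^ 2 ≤ (∫⁻ y, G (x, y)) * ∫⁻ y, ψ y ^ 2 := by
    intro x
    calc weightedConvOn E w φ ψ x ^ 2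
        = (∫⁻ y in Prod.mk x ⁻¹' E, (w x * φ y) * ψ (x - y)) ^ 2 := by
          simp only [weightedConvOn, mul_assoc]
      _ ≤ (∫⁻ y in Prod.mk x ⁻¹' E, (w x * φ y) ^ 2) *
            ∫⁻ y in Prod.mk x ⁻¹' E, ψ (x - y) ^ 2 :=
          ENNReal.lintegral_mul_sq_le (by fun_prop) (by fun_prop)
      _ ≤ (∫⁻ y, G (x, y)) * ∫⁻ y, ψ y ^ 2 := by
          refine mul_le_mul' (le_of_eq ?_) ?_
          · simp_rw [mul_pow]
            exact lintegral_slice_eq_lintegral_indicator (F := fun p => w p.1 ^ 2 * φ p.2 ^ 2) hE _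
          · exact (setLIntegral_le_lintegral _ _).trans_eq
              (lintegral_sub_left_eq_self (fun z => ψ z ^ 2) x)
  have hswap : ∫⁻ x, ∫⁻ y, G (x, y) ≤ c * ∫⁻ y, φ y ^ 2 := by
    rw [lintegral_lintegral_swap (f := fun x y => G (x, y)) hG.aemeasurable,
      ← lintegral_const_mul _ (by fun_prop)]
    refine lintegral_mono fun y => ?_
    calc ∫⁻ x, G (x, y) = (∫⁻ x in (·, y) ⁻¹' E, w x ^ 2) * φ y ^ 2 := by
          rw [← lintegral_mul_const _ (hw.pow_const 2),
            ← lintegral_indicator (measurable_prodMk_right hE)]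
          rfl
      _ ≤ c * φ y ^ 2 := mul_le_mul_left (hcol y) _
  calc ∫⁻ x, weightedConvOn E w φ ψ x ^ 2
      ≤ ∫⁻ x, (∫⁻ y, G (x, y)) * ∫⁻ y, ψ y ^ 2 := lintegral_mono hpt
    _ = (∫⁻ x, ∫⁻ y, G (x, y)) * ∫⁻ y, ψ y ^ 2 :=
        lintegral_mul_const _ hG.lintegral_prod_right'
    _ ≤ c * ((∫⁻ y, φ y ^ 2) * ∫⁻ y, ψ y ^ 2) := by
        rw [← mul_assoc]
        exact mul_le_mul_left hswap _

end weightedConvOn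

/-- By Darboux, `|h'| ≥ m > 0` forces `h'` to have constant sign on `D`. -/
theorem Convex.mul_abs_sub_le_abs_image_sub {D : Set ℝ} (hD : Convex ℝ D) {h : ℝ → ℝ}
    (hh : Differentiable ℝ h) {m : ℝ} (hm : 0 < m) (hder : ∀ x ∈ D, m ≤ |deriv h x|) :
    ∀ x ∈ D, ∀ y ∈ D, m * |x - y| ≤ |h x - h y| := by
  have hsign := hasDerivWithinAt_forall_lt_or_forall_gt_of_forall_ne hD
    (fun x _ => (hh x).hasDerivAt.hasDerivWithinAt) (m := 0) fun x hx h0 => by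
      have := hder x hx
      rw [h0, abs_zero] at this
      linarith
  have hcont := hh.continuous.continuousOn (s := D)
  have hdiff := hh.differentiableOn (s := interior D)
  suffices ∀ x ∈ D, ∀ y ∈ D, x ≤ y → m * (y - x) ≤ |h x - h y| by
    intro x hx y hy
    rcases le_total x y with hxy | hxy
    · rw [abs_sub_comm x]; simpa [abs_of_nonneg (sub_nonneg.2 hxy)] using this x hx y hy hxy
    · rw [abs_sub_comm (h x)]; simpa [abs_of_nonneg (sub_nonneg.2 hxy)] using this y hy x hx hxy
  intro x hx y hy hxy
  rcases hsign with hneg | hpos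
  · have := hD.image_sub_le_mul_sub_of_deriv_le hcont hdiff (C := -m) (fun z hz => by
      have := hder z (interior_subset hz)
      rw [abs_of_neg (hneg z (interior_subset hz))] at this
      linarith) x hx y hy hxy
    rw [abs_sub_comm]; exact (by linarith : m * (y - x) ≤ -(h y - h x)).trans (neg_le_abs _)
  · have := hD.mul_sub_le_image_sub_of_le_deriv hcont hdiff (C := m) (fun z hz => by
      have := hder z (interior_subset hz)
      rwa [abs_of_pos (hpos z (interior_subset hz))] at this) x hx y hy hxy
    rw [abs_sub_comm]; exact this.trans (le_abs_self _)

theorem volume_sublevel_le_of_le_abs_deriv {D : Set ℝ} (hD : Convex ℝ D) {h : ℝ → ℝ}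
    (hh : Differentiable ℝ h) {m : ℝ} (hm : 0 < m) (hder : ∀ x ∈ D, m ≤ |deriv h x|)
    (α M : ℝ) : volume {x ∈ D | |h x - α| ≤ M} ≤ ENNReal.ofReal (2 * M / m) := by
  refine (Real.volume_le_diam _).trans (Metric.ediam_le fun x hx y hy => ?_)
  rw [edist_dist, Real.dist_eq]
  refine ENNReal.ofReal_le_ofReal ((le_div_iff₀ hm).2 ?_)
  have := hD.mul_abs_sub_le_abs_image_sub hh hm hder x hx.1 y hy.1
  have := abs_sub_le (h x) α (h y)
  rw [abs_sub_comm α] at this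
  linarith [hx.2, hy.2]

theorem hasDerivAt_Phi_snd (β ξ ξ₁ : ℝ) :
    HasDerivAt (fun x => Phi β ξ x (ξ - x))
      (ξ * (2 * ξ₁ - ξ) * (5 * (ξ₁ ^ 2 + (ξ - ξ₁) ^ 2) + 3 * β)) ξ₁ := by
  have h := ((hasDerivAt_id ξ₁).const_sub ξ)
  have := ((((hasDerivAt_pow 5 ξ₁).add (h.pow 5)).sub_const (ξ ^ 5)).add
    ((((hasDerivAt_pow 3 ξ₁).add (h.pow 3)).sub_const (ξ ^ 3)).const_mul β))
  exact this.congr_deriv (by norm_num; ring)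

theorem hasDerivAt_Phi_fst (β ξ ξ₁ : ℝ) :
    HasDerivAt (fun x => Phi β x ξ₁ (x - ξ₁))
      (ξ₁ * (ξ₁ - 2 * ξ) * (5 * ((ξ - ξ₁) ^ 2 + ξ ^ 2) + 3 * β)) ξ := by
  have h := ((hasDerivAt_id ξ).sub_const ξ₁)
  have := ((((h.pow 5).const_add (ξ₁ ^ 5)).sub (hasDerivAt_pow 5 ξ)).add
    ((((h.pow 3).const_add (ξ₁ ^ 3)).sub (hasDerivAt_pow 3 ξ)).const_mul β))
  exact this.congr_deriv (by norm_num; ring)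

theorem abs_pow_three_le_abs_deriv_Phi_snd {β ξ ξ₁ : ℝ} (hξ : 3 + |β| ≤ |ξ|)
    (hξ₁ : 1 ≤ |2 * ξ₁ - ξ|) :
    |ξ| ^ 3 ≤ |ξ * (2 * ξ₁ - ξ) * (5 * (ξ₁ ^ 2 + (ξ - ξ₁) ^ 2) + 3 * β)| := by
  have hP : |ξ| ^ 2 ≤ 5 * (ξ₁ ^ 2 + (ξ - ξ₁) ^ 2) + 3 * β := by
    nlinarith [sq_abs ξ, neg_abs_le β, sq_nonneg (2 * ξ₁ - ξ), sq_nonneg (|ξ| - 1)]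
  rw [abs_mul, abs_mul, abs_of_nonneg ((sq_nonneg _).trans hP), pow_succ', ← one_mul (|ξ| ^ 2),
    ← mul_assoc]
  gcongr

theorem pow_four_le_abs_deriv_Phi_fst {β ξ ξ₁ : ℝ} (hξ₁ : 3 + |β| ≤ 2 * |ξ₁| - 1)
    (hξ : |2 * ξ₁ - ξ| < 1) :
    ξ₁ ^ 4 ≤ |ξ₁ * (ξ₁ - 2 * ξ) * (5 * ((ξ - ξ₁) ^ 2 + ξ ^ 2) + 3 * β)| := by
  have h2 : |2 * ξ₁| ≤ |ξ| + 1 := by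
    have := abs_sub_abs_le_abs_sub (2 * ξ₁) ξ; linarith
  rw [abs_mul, abs_two] at h2
  have hξ_ge : |ξ₁| ≤ |ξ| := by linarith [abs_nonneg β]
  have hlin : |ξ₁| ≤ |ξ₁ - 2 * ξ| := by
    have := abs_sub_abs_le_abs_sub (3 * ξ₁) (2 * (2 * ξ₁ - ξ))
    rw [abs_mul, abs_mul, abs_two, show |(3 : ℝ)| = 3 by norm_num,
      show 3 * ξ₁ - 2 * (2 * ξ₁ - ξ) = -(ξ₁ - 2 * ξ) by ring, abs_neg] at this
    linarith [abs_nonneg β]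
  have hP : |ξ₁| ^ 2 ≤ 5 * ((ξ - ξ₁) ^ 2 + ξ ^ 2) + 3 * β := by
    nlinarith [sq_abs ξ, neg_abs_le β, sq_nonneg (ξ - ξ₁), abs_nonneg ξ₁,
      mul_le_mul hξ_ge hξ_ge (abs_nonneg _) (abs_nonneg _)]
  rw [abs_mul, abs_mul, abs_of_nonneg ((sq_nonneg _).trans hP),
    show ξ₁ ^ 4 = |ξ₁| * |ξ₁| * |ξ₁| ^ 2 by rw [abs_mul_abs_self, sq_abs]; ring]
  gcongr

theorem ofReal_sq_mul_volume_Phi_sublevel_le {β ξ : ℝ} (hξ : 3 + |β| ≤ |ξ|) (α : ℝ) {M : ℝ}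
    (hM : 0 ≤ M) :
    ENNReal.ofReal (ξ ^ 2) * volume {ξ₁ | 1 ≤ |2 * ξ₁ - ξ| ∧ |Phi β ξ ξ₁ (ξ - ξ₁) - α| ≤ M}
      ≤ ENNReal.ofReal (4 * M) := by
  have hξ0 : 0 < |ξ| := by linarith [abs_nonneg β]
  have hvol : ∀ D : Set ℝ, Convex ℝ D → (∀ x ∈ D, 1 ≤ |2 * x - ξ|) →
      volume {x ∈ D | |Phi β ξ x (ξ - x) - α| ≤ M} ≤ ENNReal.ofReal (2 * M / |ξ| ^ 3) :=
    fun D hD hD1 => volume_sublevel_le_of_le_abs_deriv hD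
      (fun x => (hasDerivAt_Phi_snd β ξ x).differentiableAt) (by positivity)
      (fun x hx => (hasDerivAt_Phi_snd β ξ x).deriv ▸
        abs_pow_three_le_abs_deriv_Phi_snd hξ (hD1 x hx)) α M
  have hsplit : {ξ₁ | 1 ≤ |2 * ξ₁ - ξ| ∧ |Phi β ξ ξ₁ (ξ - ξ₁) - α| ≤ M} ⊆
      {x ∈ Ici ((ξ + 1) / 2) | |Phi β ξ x (ξ - x) - α| ≤ M} ∪
        {x ∈ Iic ((ξ - 1) / 2) | |Phi β ξ x (ξ - x) - α| ≤ M} := by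
    rintro x ⟨hx1, hx2⟩
    rcases le_abs'.1 hx1 with h | h
    · exact Or.inr ⟨by rw [mem_Iic]; linarith, hx2⟩
    · exact Or.inl ⟨by rw [mem_Ici]; linarith, hx2⟩
  have hIci : ∀ x ∈ Ici ((ξ + 1) / 2), 1 ≤ |2 * x - ξ| := fun x hx =>
    le_abs.2 (Or.inl (by rw [mem_Ici] at hx; linarith))
  have hIic : ∀ x ∈ Iic ((ξ - 1) / 2), 1 ≤ |2 * x - ξ| := fun x hx =>
    le_abs.2 (Or.inr (by rw [mem_Iic] at hx; linarith))
  calc ENNReal.ofReal (ξ ^ 2) * volume {ξ₁ | 1 ≤ |2 * ξ₁ - ξ| ∧ |Phi β ξ ξ₁ (ξ - ξ₁) - α| ≤ M}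
      ≤ ENNReal.ofReal (ξ ^ 2) *
          (ENNReal.ofReal (2 * M / |ξ| ^ 3) + ENNReal.ofReal (2 * M / |ξ| ^ 3)) := by
        gcongr
        exact (measure_mono hsplit).trans ((measure_union_le _ _).trans
          (add_le_add (hvol _ (convex_Ici _) hIci) (hvol _ (convex_Iic _) hIic)))
    _ = ENNReal.ofReal (4 * M / |ξ|) := by
        rw [← ENNReal.ofReal_add (by positivity) (by positivity),
          ← ENNReal.ofReal_mul (sq_nonneg _), ← sq_abs ξ]
        congr 1
        field_simp
        ring
    _ ≤ ENNReal.ofReal (4 * M) :=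
        ENNReal.ofReal_le_ofReal (div_le_self (by positivity) (by linarith [abs_nonneg β]))

theorem volume_Phi_sublevel_near_diag_le {β ξ₁ : ℝ} (hξ₁ : 3 + |β| ≤ 2 * |ξ₁| - 1) (α M : ℝ) :
    volume {ξ | |2 * ξ₁ - ξ| < 1 ∧ |Phi β ξ ξ₁ (ξ - ξ₁) - α| ≤ M}
      ≤ ENNReal.ofReal (2 * M / ξ₁ ^ 4) := by
  have hξ₁0 : ξ₁ ≠ 0 := abs_pos.1 (by linarith [abs_nonneg β])
  have hsub : {ξ | |2 * ξ₁ - ξ| < 1 ∧ |Phi β ξ ξ₁ (ξ - ξ₁) - α| ≤ M} ⊆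
      {ξ ∈ Ioo (2 * ξ₁ - 1) (2 * ξ₁ + 1) | |Phi β ξ ξ₁ (ξ - ξ₁) - α| ≤ M} := fun ξ ⟨hξ, hΦ⟩ => by
    rw [abs_lt] at hξ
    exact ⟨⟨by linarith, by linarith⟩, hΦ⟩
  refine (measure_mono hsub).trans (volume_sublevel_le_of_le_abs_deriv (convex_Ioo _ _)
    (fun ξ => (hasDerivAt_Phi_fst β ξ ξ₁).differentiableAt) (by positivity)
    (fun ξ hξ => (hasDerivAt_Phi_fst β ξ ξ₁).deriv ▸ pow_four_le_abs_deriv_Phi_fst hξ₁ ?_) α M)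
  rw [abs_lt]
  constructor <;> linarith [hξ.1, hξ.2]

theorem setLIntegral_sq_Phi_sublevel_near_diag_le (β α : ℝ) {M : ℝ} (hM : 0 ≤ M) (ξ₁ : ℝ) :
    ∫⁻ ξ in {ξ | |2 * ξ₁ - ξ| < 1 ∧ |Phi β ξ ξ₁ (ξ - ξ₁) - α| ≤ M}, ENNReal.ofReal (ξ ^ 2)
      ≤ ENNReal.ofReal (2 * (5 + |β|) ^ 2 + 18 * M) := by
  set S := {ξ | |2 * ξ₁ - ξ| < 1 ∧ |Phi β ξ ξ₁ (ξ - ξ₁) - α| ≤ M}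
  have hSIoo : S ⊆ Ioo (2 * ξ₁ - 1) (2 * ξ₁ + 1) := fun ξ ⟨hξ, _⟩ => by
    rw [abs_lt] at hξ
    exact ⟨by linarith, by linarith⟩
  have hsq : ∀ ξ ∈ S, ξ ^ 2 ≤ (2 * |ξ₁| + 1) ^ 2 := fun ξ hξ => by
    refine sq_le_sq' ?_ ?_ <;> cases abs_cases ξ₁ <;> linarith [(hSIoo hξ).1, (hSIoo hξ).2]
  rcases lt_or_ge (2 * |ξ₁| - 1) (3 + |β|) with hsmall | hlarge
  · calc ∫⁻ ξ in S, ENNReal.ofReal (ξ ^ 2)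
        ≤ ENNReal.ofReal ((5 + |β|) ^ 2) * volume S :=
          setLIntegral_le_mul_measure fun ξ hξ => ENNReal.ofReal_le_ofReal ((hsq ξ hξ).trans
            (pow_le_pow_left₀ (by positivity) (by linarith) 2))
      _ ≤ ENNReal.ofReal ((5 + |β|) ^ 2) * volume (Ioo (2 * ξ₁ - 1) (2 * ξ₁ + 1)) := by
          gcongr
      _ ≤ ENNReal.ofReal (2 * (5 + |β|) ^ 2 + 18 * M) := by
          rw [Real.volume_Ioo, ← ENNReal.ofReal_mul (by positivity)]
          exact ENNReal.ofReal_le_ofReal (by nlinarith)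
  · have hξ₁ : 1 ≤ |ξ₁| := by linarith [abs_nonneg β]
    have hξ₁0 : ξ₁ ≠ 0 := abs_pos.1 (by linarith)
    have hvol := volume_Phi_sublevel_near_diag_le hlarge α M
    calc ∫⁻ ξ in S, ENNReal.ofReal (ξ ^ 2)
        ≤ ENNReal.ofReal (9 * ξ₁ ^ 2) * volume S :=
          setLIntegral_le_mul_measure fun ξ hξ => ENNReal.ofReal_le_ofReal <| (hsq ξ hξ).trans
            (by nlinarith [sq_abs ξ₁])
      _ ≤ ENNReal.ofReal (9 * ξ₁ ^ 2) * ENNReal.ofReal (2 * M / ξ₁ ^ 4) := by gcongr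
      _ = ENNReal.ofReal (18 * M / ξ₁ ^ 2) := by
          rw [← ENNReal.ofReal_mul (by positivity)]
          congr 1
          field_simp
          ring
      _ ≤ ENNReal.ofReal (2 * (5 + |β|) ^ 2 + 18 * M) := by
          refine ENNReal.ofReal_le_ofReal ((div_le_self (by positivity) ?_).trans ?_)
          · nlinarith [sq_abs ξ₁]
          · nlinarith

def modulationSublevel (β α M : ℝ) : Set (ℝ × ℝ) :=
  {p | |Phi β p.1 p.2 (p.1 - p.2) - α| ≤ M}

theorem measurableSet_modulationSublevel (β α M : ℝ) :
    MeasurableSet (modulationSublevel β α M) :=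
  measurableSet_le (by unfold Phi; fun_prop) measurable_const

/-- On this region `|∂_{ξ₁} Φ(ξ, ξ₁, ξ - ξ₁)| ≥ |ξ|³`. -/
def offDiagonalRegion (β : ℝ) : Set (ℝ × ℝ) :=
  {p | 3 + |β| ≤ |p.1| ∧ 1 ≤ |2 * p.2 - p.1|}

theorem measurableSet_offDiagonalRegion (β : ℝ) : MeasurableSet (offDiagonalRegion β) :=
  (measurableSet_le (g := fun p : ℝ × ℝ => |p.1|) measurable_const (by fun_prop)).inter
    (measurableSet_le (g := fun p : ℝ × ℝ => |2 * p.2 - p.1|) measurable_const (by fun_prop))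

theorem ofReal_sq_mul_volume_slice_offDiagonal_le (β α : ℝ) {M : ℝ} (hM : 0 ≤ M) (ξ : ℝ) :
    ENNReal.ofReal (ξ ^ 2) * volume (Prod.mk ξ ⁻¹' (modulationSublevel β α M ∩ offDiagonalRegion β))
      ≤ ENNReal.ofReal (4 * M) := by
  by_cases hξ : 3 + |β| ≤ |ξ|
  · refine le_trans ?_ (ofReal_sq_mul_volume_Phi_sublevel_le hξ α hM)
    gcongr
    exact fun ξ₁ h => ⟨h.2.2, h.1⟩
  · have : Prod.mk ξ ⁻¹' (modulationSublevel β α M ∩ offDiagonalRegion β) = ∅ :=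
      eq_empty_of_forall_notMem fun ξ₁ h => hξ h.2.1
    simp [this]

theorem setLIntegral_sq_slice_diff_offDiagonal_le (β α : ℝ) {M : ℝ} (hM : 0 ≤ M) (ξ₁ : ℝ) :
    ∫⁻ ξ in (·, ξ₁) ⁻¹' (modulationSublevel β α M \ offDiagonalRegion β), ENNReal.ofReal (ξ ^ 2)
      ≤ ENNReal.ofReal (2 * (3 + |β|) ^ 3 + (2 * (5 + |β|) ^ 2 + 18 * M)) := by
  set K := 3 + |β|
  have hsub : (·, ξ₁) ⁻¹' (modulationSublevel β α M \ offDiagonalRegion β) ⊆ Icc (-K) K ∪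
      {ξ | |2 * ξ₁ - ξ| < 1 ∧ |Phi β ξ ξ₁ (ξ - ξ₁) - α| ≤ M} := by
    rintro ξ ⟨hE, hG⟩
    by_cases hξ : K ≤ |ξ|
    · exact Or.inr ⟨lt_of_not_ge fun h => hG ⟨hξ, h⟩, hE⟩
    · exact Or.inl (abs_le.1 (le_of_not_ge hξ))
  calc _ ≤ (∫⁻ ξ in Icc (-K) K, ENNReal.ofReal (ξ ^ 2)) +
          ∫⁻ ξ in {ξ | |2 * ξ₁ - ξ| < 1 ∧ |Phi β ξ ξ₁ (ξ - ξ₁) - α| ≤ M}, ENNReal.ofReal (ξ ^ 2) :=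
        (lintegral_mono_set hsub).trans (lintegral_union_le _ _ _)
    _ ≤ ENNReal.ofReal (K ^ 2) * ENNReal.ofReal (2 * K) +
          ENNReal.ofReal (2 * (5 + |β|) ^ 2 + 18 * M) := by
        gcongr
        · refine (setLIntegral_le_mul_measure fun ξ hξ =>
            ENNReal.ofReal_le_ofReal (sq_le_sq' hξ.1 hξ.2)).trans_eq ?_
          rw [Real.volume_Icc]
          ring_nf
        · exact setLIntegral_sq_Phi_sublevel_near_diag_le β α hM ξ₁
    _ = _ := by
        rw [← ENNReal.ofReal_mul (by positivity), ← ENNReal.ofReal_add (by positivity)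
          (by positivity)]
        ring_nf

noncomputable def kawaharaConst (β : ℝ) : ℝ :=
  4 * ((3 + |β|) ^ 3 + (5 + |β|) ^ 2 + 11)

theorem lintegral_weightedConvOn_modulationSublevel_sq_le {β α M : ℝ} (hM : 1 ≤ M)
    {φ ψ : ℝ → ℝ≥0∞} (hφ : Measurable φ) (hψ : Measurable ψ) :
    ∫⁻ x, weightedConvOn (modulationSublevel β α M) (fun x => ENNReal.ofReal |x|) φ ψ x ^ 2
      ≤ ENNReal.ofReal (kawaharaConst β * M) * ((∫⁻ y, φ y ^ 2) * ∫⁻ y, ψ y ^ 2) := by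
  set E := modulationSublevel β α M
  set G := offDiagonalRegion β
  set w : ℝ → ℝ≥0∞ := fun x => ENNReal.ofReal |x|
  set P := (∫⁻ y, φ y ^ 2) * ∫⁻ y, ψ y ^ 2
  have hE := measurableSet_modulationSublevel β α M
  have hw : Measurable w := by fun_prop
  have hw2 : ∀ x, w x ^ 2 = ENNReal.ofReal (x ^ 2) := fun x => by
    rw [← ENNReal.ofReal_pow (abs_nonneg x), sq_abs]
  have hrow : ∫⁻ x, weightedConvOn (E ∩ G) w φ ψ x ^ 2 ≤ ENNReal.ofReal (4 * M) * P :=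
    lintegral_weightedConvOn_sq_le_of_slice_volume hφ hψ fun x => by
      rw [hw2]; exact ofReal_sq_mul_volume_slice_offDiagonal_le β α (by linarith) x
  have hcol : ∫⁻ x, weightedConvOn (E \ G) w φ ψ x ^ 2 ≤
      ENNReal.ofReal (2 * (3 + |β|) ^ 3 + (2 * (5 + |β|) ^ 2 + 18 * M)) * P :=
    lintegral_weightedConvOn_sq_le_of_slice_lintegral (hE.diff (measurableSet_offDiagonalRegion β))
      hw hφ hψ fun y => by
        simp_rw [hw2]; exact setLIntegral_sq_slice_diff_offDiagonal_le β α (by linarith) y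
  have hsplit : ∀ x, weightedConvOn E w φ ψ x ^ 2 ≤
      2 * weightedConvOn (E ∩ G) w φ ψ x ^ 2 + 2 * weightedConvOn (E \ G) w φ ψ x ^ 2 := fun x =>
    (pow_le_pow_left' (by simpa only [inter_union_sdiff] using
      weightedConvOn_union_le (E₁ := E ∩ G) (E₂ := E \ G) (w := w) (φ := φ) (ψ := ψ) x) 2).trans
      ((ENNReal.add_sq_le_two_mul _ _).trans_eq (mul_add _ _ _))
  calc ∫⁻ x, weightedConvOn E w φ ψ x ^ 2
      ≤ 2 * (∫⁻ x, weightedConvOn (E ∩ G) w φ ψ x ^ 2) +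
          2 * ∫⁻ x, weightedConvOn (E \ G) w φ ψ x ^ 2 := by
        rw [← lintegral_const_mul' _ _ ofNat_ne_top, ← lintegral_const_mul' _ _ ofNat_ne_top,
          ← lintegral_add_left (((measurable_weightedConvOn (hE.inter
            (measurableSet_offDiagonalRegion β)) hw hφ hψ).pow_const 2).const_mul _)]
        exact lintegral_mono hsplit
    _ ≤ 2 * (ENNReal.ofReal (4 * M) * P) +
          2 * (ENNReal.ofReal (2 * (3 + |β|) ^ 3 + (2 * (5 + |β|) ^ 2 + 18 * M)) * P) := by
        gcongr
    _ ≤ ENNReal.ofReal (kawaharaConst β * M) * P := by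
        rw [← mul_add, ← add_mul, ← mul_assoc, ← ENNReal.ofReal_add (by positivity) (by positivity),
          ← ENNReal.ofReal_ofNat 2, ← ENNReal.ofReal_mul zero_le_two]
        gcongr ENNReal.ofReal ?_ * _
        have : 0 ≤ (3 + |β|) ^ 3 + (5 + |β|) ^ 2 := by positivity
        unfold kawaharaConst
        nlinarith

/-- `⟨x⟩^s = (1 + x²)^{s/2}`. -/
noncomputable def bracketPow (s x : ℝ) : ℝ≥0∞ :=
  ENNReal.ofReal ((1 + x ^ 2) ^ (s / 2))

/-- Peetre's inequality, from `1 + x² ≤ 2 (1 + y²)(1 + (x - y)²)`. -/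
theorem bracketPow_le {s : ℝ} (hs : 0 ≤ s) (x y : ℝ) :
    bracketPow s x ≤ ENNReal.ofReal (2 ^ (s / 2)) * (bracketPow s y * bracketPow s (x - y)) := by
  simp only [bracketPow]
  rw [← ENNReal.ofReal_mul (by positivity), ← ENNReal.ofReal_mul (by positivity),
    ← Real.mul_rpow (by positivity) (by positivity),
    ← Real.mul_rpow (by positivity) (by positivity)]
  exact ENNReal.ofReal_le_ofReal <| Real.rpow_le_rpow (by positivity)
    (by nlinarith [sq_nonneg (y - (x - y)), sq_nonneg (y * (x - y))]) (by positivity)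

noncomputable def weightedENorm (s : ℝ) (f : ℝ → ℂ) (ξ : ℝ) : ℝ≥0∞ :=
  bracketPow s ξ * ‖f ξ‖ₑ

theorem measurable_weightedENorm (s : ℝ) {f : ℝ → ℂ} (hf : Measurable f) :
    Measurable (weightedENorm s f) := by
  unfold weightedENorm bracketPow; fun_prop

theorem weightedENorm_sq (s : ℝ) (f : ℝ → ℂ) (x : ℝ) :
    weightedENorm s f x ^ 2 = ENNReal.ofReal ((1 + x ^ 2) ^ s * ‖f x‖ ^ 2) := by
  rw [weightedENorm, bracketPow, ← ofReal_norm, ← ENNReal.ofReal_mul (by positivity),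
    ← ENNReal.ofReal_pow (by positivity), mul_pow, ← Real.rpow_natCast,
    ← Real.rpow_mul (by positivity)]
  norm_num

theorem wnorm_eq_lintegral {s : ℝ} {f : ℝ → ℂ} (hf : AEStronglyMeasurable f) :
    wnorm s f = (∫⁻ x, weightedENorm s f x ^ 2).toReal ^ (1 / 2 : ℝ) := by
  have hw : Continuous fun x : ℝ => (1 + x ^ 2) ^ s :=
    (continuous_const.add (continuous_pow 2)).rpow_const fun x =>
      Or.inl (by positivity : 1 + x ^ 2 ≠ 0)
  simp_rw [wnorm, weightedENorm_sq]
  congr 1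
  exact integral_eq_lintegral_of_nonneg_ae (ae_of_all _ fun x => by positivity)
    (hw.aestronglyMeasurable.mul (hf.norm.pow 2))

theorem lintegral_weightedENorm_sq_ne_top {s : ℝ} {f : ℝ → ℂ}
    (hf : Integrable fun ξ : ℝ => (1 + ξ ^ 2) ^ s * ‖f ξ‖ ^ 2) :
    ∫⁻ x, weightedENorm s f x ^ 2 ≠ ⊤ := by
  simp_rw [weightedENorm_sq]
  exact hf.lintegral_lt_top.ne

theorem enorm_I_mul_exp_mul (x t θ : ℝ) (a b : ℂ) :
    ‖Complex.I * (x : ℂ) * Complex.exp (Complex.I * (t : ℂ) * (θ : ℂ)) * a * b‖ₑ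
      = ENNReal.ofReal |x| * (‖a‖ₑ * ‖b‖ₑ) := by
  have : Complex.I * (t : ℂ) * (θ : ℂ) = ((t * θ : ℝ) : ℂ) * Complex.I := by push_cast; ring
  rw [← ofReal_norm, ← ofReal_norm, ← ofReal_norm, ← ENNReal.ofReal_mul (norm_nonneg _),
    ← ENNReal.ofReal_mul (abs_nonneg _)]
  simp only [norm_mul, this, Complex.norm_exp_ofReal_mul_I, Complex.norm_I, Complex.norm_real,
    Real.norm_eq_abs, one_mul, mul_assoc]

noncomputable def nonlinearKernel (β t α M : ℝ) (f g : ℝ → ℂ) (ξ ξ₁ : ℝ) : ℂ :=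
  if |Phi β ξ ξ₁ (ξ - ξ₁) - α| ≤ M then
    Complex.I * (ξ : ℂ) * Complex.exp (Complex.I * (t : ℂ) * ((Phi β ξ ξ₁ (ξ - ξ₁) : ℝ) : ℂ))
      * f ξ₁ * g (ξ - ξ₁)
  else 0

theorem measurable_nonlinearKernel (β t α M : ℝ) {f g : ℝ → ℂ} (hf : Measurable f)
    (hg : Measurable g) :
    Measurable fun p : ℝ × ℝ => nonlinearKernel β t α M f g p.1 p.2 :=
  Measurable.ite (measurableSet_modulationSublevel β α M) (by unfold Phi; fun_prop)
    measurable_const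

theorem enorm_nonlinearKernel (β t α M : ℝ) (f g : ℝ → ℂ) (ξ ξ₁ : ℝ) :
    ‖nonlinearKernel β t α M f g ξ ξ₁‖ₑ = (Prod.mk ξ ⁻¹' modulationSublevel β α M).indicator
      (fun ξ₁ => ENNReal.ofReal |ξ| * (‖f ξ₁‖ₑ * ‖g (ξ - ξ₁)‖ₑ)) ξ₁ := by
  by_cases h : |Phi β ξ ξ₁ (ξ - ξ₁) - α| ≤ M
  · rw [nonlinearKernel, if_pos h, indicator_of_mem (show ξ₁ ∈ _ from h), enorm_I_mul_exp_mul]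
  · rw [nonlinearKernel, if_neg h, indicator_of_notMem (show ξ₁ ∉ _ from h), enorm_zero]

theorem bracketPow_mul_enorm_integral_nonlinearKernel_le {s : ℝ} (hs : 0 ≤ s) (β t α M : ℝ)
    (f g : ℝ → ℂ) (ξ : ℝ) :
    bracketPow s ξ * ‖∫ ξ₁, nonlinearKernel β t α M f g ξ ξ₁‖ₑ
      ≤ ENNReal.ofReal (2 ^ (s / 2)) * weightedConvOn (modulationSublevel β α M)
          (fun x => ENNReal.ofReal |x|) (weightedENorm s f) (weightedENorm s g) ξ := by
  set S := Prod.mk ξ ⁻¹' modulationSublevel β α M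
  have hS : MeasurableSet S := measurable_prodMk_left (measurableSet_modulationSublevel β α M)
  calc bracketPow s ξ * ‖∫ ξ₁, nonlinearKernel β t α M f g ξ ξ₁‖ₑ
      ≤ bracketPow s ξ * ∫⁻ ξ₁ in S, ENNReal.ofReal |ξ| * (‖f ξ₁‖ₑ * ‖g (ξ - ξ₁)‖ₑ) := by
        gcongr
        refine (enorm_integral_le_lintegral_enorm _).trans_eq ?_
        rw [← lintegral_indicator hS]
        exact lintegral_congr (enorm_nonlinearKernel β t α M f g ξ)
    _ = ∫⁻ ξ₁ in S, bracketPow s ξ * (ENNReal.ofReal |ξ| * (‖f ξ₁‖ₑ * ‖g (ξ - ξ₁)‖ₑ)) :=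
        (lintegral_const_mul' _ _ ofReal_ne_top).symm
    _ ≤ ∫⁻ ξ₁ in S, ENNReal.ofReal (2 ^ (s / 2)) * (ENNReal.ofReal |ξ| *
          (weightedENorm s f ξ₁ * weightedENorm s g (ξ - ξ₁))) := by
        refine lintegral_mono fun ξ₁ => ?_
        calc _ ≤ ENNReal.ofReal (2 ^ (s / 2)) * (bracketPow s ξ₁ * bracketPow s (ξ - ξ₁)) *
                (ENNReal.ofReal |ξ| * (‖f ξ₁‖ₑ * ‖g (ξ - ξ₁)‖ₑ)) := by
              gcongr; exact bracketPow_le hs ξ ξ₁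
          _ = _ := by simp only [weightedENorm]; ring
    _ = _ := lintegral_const_mul' _ _ ofReal_ne_top

theorem lintegral_weightedENorm_integral_nonlinearKernel_sq_le {s : ℝ} (hs : 0 ≤ s)
    (β t α : ℝ) {M : ℝ} (hM : 1 ≤ M) {f g : ℝ → ℂ} (hf : Measurable f) (hg : Measurable g) :
    ∫⁻ ξ, weightedENorm s (fun ξ => ∫ ξ₁, nonlinearKernel β t α M f g ξ ξ₁) ξ ^ 2
      ≤ ENNReal.ofReal (2 ^ s * kawaharaConst β * M) *
        ((∫⁻ ξ, weightedENorm s f ξ ^ 2) * ∫⁻ ξ, weightedENorm s g ξ ^ 2) :=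
  calc _ ≤ ∫⁻ ξ, ENNReal.ofReal (2 ^ s) * weightedConvOn (modulationSublevel β α M)
          (fun x => ENNReal.ofReal |x|) (weightedENorm s f) (weightedENorm s g) ξ ^ 2 := by
        refine lintegral_mono fun ξ => (pow_le_pow_left'
          (bracketPow_mul_enorm_integral_nonlinearKernel_le hs β t α M f g ξ) 2).trans_eq ?_
        rw [mul_pow, ← ENNReal.ofReal_pow (by positivity), ← Real.rpow_natCast,
          ← Real.rpow_mul zero_le_two]
        norm_num
    _ ≤ ENNReal.ofReal (2 ^ s) * (ENNReal.ofReal (kawaharaConst β * M) *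
          ((∫⁻ ξ, weightedENorm s f ξ ^ 2) * ∫⁻ ξ, weightedENorm s g ξ ^ 2)) := by
        rw [lintegral_const_mul' _ _ ofReal_ne_top]
        gcongr
        exact lintegral_weightedConvOn_modulationSublevel_sq_le hM (measurable_weightedENorm s hf)
          (measurable_weightedENorm s hg)
    _ = _ := by
        rw [← mul_assoc, ← ENNReal.ofReal_mul (by positivity), mul_assoc (2 ^ s)]

/-- Estimate (nm) of Proposition 3.1: `‖N^α_{≤M}(f,g)‖_{H^s} ≲ M^{1/2} ‖f‖_{H^s} ‖g‖_{H^s}`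
for `s ≥ 0` (stated on the Fourier side). -/
theorem kawahara_N_leM_estimate (s β : ℝ) (hs : 0 ≤ s) :
    ∃ C > 0, ∀ (t α M : ℝ), 1 ≤ M → ∀ f g : ℝ → ℂ,
      Measurable f → Measurable g →
      Integrable (fun ξ : ℝ => (1 + ξ ^ 2) ^ s * ‖f ξ‖ ^ 2) →
      Integrable (fun ξ : ℝ => (1 + ξ ^ 2) ^ s * ‖g ξ‖ ^ 2) →
      wnorm s (fun ξ : ℝ => ∫ ξ₁ : ℝ,
          if |Phi β ξ ξ₁ (ξ - ξ₁) - α| ≤ M then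
            Complex.I * (ξ : ℂ) * Complex.exp (Complex.I * (t : ℂ) * ((Phi β ξ ξ₁ (ξ - ξ₁) : ℝ) : ℂ))
              * f ξ₁ * g (ξ - ξ₁)
          else 0)
        ≤ C * M ^ ((1 : ℝ) / 2) * wnorm s f * wnorm s g := by
  have hc : 0 ≤ 2 ^ s * kawaharaConst β := by unfold kawaharaConst; positivity
  refine ⟨(2 ^ s * kawaharaConst β) ^ (1 / 2 : ℝ), by unfold kawaharaConst; positivity,
    fun t α M hM f g hf hg hif hig => ?_⟩
  have hF : AEStronglyMeasurable fun ξ => ∫ ξ₁, nonlinearKernel β t α M f g ξ ξ₁ :=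
    (measurable_nonlinearKernel β t α M hf hg).stronglyMeasurable.integral_prod_right'
      |>.aestronglyMeasurable
  change wnorm s (fun ξ => ∫ ξ₁, nonlinearKernel β t α M f g ξ ξ₁) ≤ _
  rw [wnorm_eq_lintegral hF, wnorm_eq_lintegral hf.aestronglyMeasurable,
    wnorm_eq_lintegral hg.aestronglyMeasurable, ← Real.mul_rpow hc (by linarith)]
  exact toReal_rpow_half_le_of_le_ofReal_mul (by positivity) (lintegral_weightedENorm_sq_ne_top hif)
    (lintegral_weightedENorm_sq_ne_top hig)
    (lintegral_weightedENorm_integral_nonlinearKernel_sq_le hs β t α hM hf hg)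
end

section
/- Let s ≥ 0. There exists C > 0 (depending only on s) such that for all measurable f, g : ℝ → ℂ with ‖f‖_{L²_s}, ‖g‖_{L²_s} < ∞, one has sup_{ξ ∈ ℝ} |ξ|^s · | ∫_ℝ f(ξ₁) · g(ξ − ξ₁) dξ₁ | ≤ C · ‖f‖_{L²_s} ‖g‖_{L²_s}. -/
/-!
Since `ξ² ≤ 2 ⟨ξ₁⟩² ⟨ξ - ξ₁⟩²`, the weight `|ξ|^s` splits as `2^{s/2} ⟨ξ₁⟩^s ⟨ξ - ξ₁⟩^s` under the
integral; Cauchy–Schwarz in `ξ₁` together with the translation invariance of Lebesgue measure then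
bounds the result by `2^{s/2} ‖f‖_{L²_s} ‖g‖_{L²_s}`.
-/

open MeasureTheory

section CauchySchwarz

variable {G : Type*} [MeasurableSpace G] [AddGroup G] [MeasurableAdd G] [MeasurableNeg G]
  {μ : Measure G} [μ.IsNegInvariant] [μ.IsAddLeftInvariant]

theorem integral_mul_sub_le_of_nonneg {F H : G → ℝ} (hF : 0 ≤ F) (hH : 0 ≤ H)
    (hF₂ : MemLp F 2 μ) (hH₂ : MemLp H 2 μ) (ξ : G) :
    ∫ x, F x * H (ξ - x) ∂μ ≤
      (∫ x, F x ^ 2 ∂μ) ^ ((1 : ℝ) / 2) * (∫ x, H x ^ 2 ∂μ) ^ ((1 : ℝ) / 2) := by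
  have hH₂ξ : MemLp (fun x => H (ξ - x)) 2 μ :=
    hH₂.comp_measurePreserving (Measure.measurePreserving_sub_left μ ξ)
  have holder := integral_mul_le_Lp_mul_Lq_of_nonneg Real.HolderConjugate.two_two
    (Filter.Eventually.of_forall hF) (Filter.Eventually.of_forall fun x => hH (ξ - x))
    (by simpa using hF₂) (by simpa using hH₂ξ)
  simpa only [Real.rpow_two, integral_sub_left_eq_self (fun y => H y ^ 2) μ ξ] using holder

end CauchySchwarz

theorem sq_le_two_mul_one_add_sq_mul_one_add_sq (ξ x : ℝ) :
    ξ ^ 2 ≤ 2 * ((1 + x ^ 2) * (1 + (ξ - x) ^ 2)) := by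
  nlinarith [sq_nonneg (x - (ξ - x)), sq_nonneg (x * (ξ - x))]

theorem abs_rpow_le_two_rpow_mul {s : ℝ} (hs : 0 ≤ s) (ξ x : ℝ) :
    |ξ| ^ s ≤ 2 ^ (s / 2) * ((1 + x ^ 2) ^ (s / 2) * (1 + (ξ - x) ^ 2) ^ (s / 2)) := by
  have habs : |ξ| ^ s = (ξ ^ 2) ^ (s / 2) := by
    rw [← sq_abs, ← Real.rpow_natCast_mul (abs_nonneg ξ)]
    congr 1
    ring
  rw [habs, ← Real.mul_rpow (by positivity) (by positivity),
    ← Real.mul_rpow (by positivity) (by positivity)]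
  exact Real.rpow_le_rpow (sq_nonneg ξ) (sq_le_two_mul_one_add_sq_mul_one_add_sq ξ x)
    (by positivity)

noncomputable def weightedAbs (s : ℝ) (f : ℝ → ℂ) (x : ℝ) : ℝ :=
  (1 + x ^ 2) ^ (s / 2) * ‖f x‖

theorem weightedAbs_nonneg (s : ℝ) (f : ℝ → ℂ) : 0 ≤ weightedAbs s f :=
  fun x => by unfold weightedAbs; positivity

theorem weightedAbs_sq (s : ℝ) (f : ℝ → ℂ) (x : ℝ) :
    weightedAbs s f x ^ 2 = (1 + x ^ 2) ^ s * ‖f x‖ ^ 2 := by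
  rw [weightedAbs, mul_pow, ← Real.rpow_mul_natCast (by positivity)]
  norm_num

theorem memLp_weightedAbs {s : ℝ} {f : ℝ → ℂ} (hf : Measurable f)
    (hfi : Integrable (fun x : ℝ => (1 + x ^ 2) ^ s * ‖f x‖ ^ 2)) :
    MemLp (weightedAbs s f) 2 := by
  have hmeas : Measurable (weightedAbs s f) := by
    unfold weightedAbs
    fun_prop
  rw [memLp_two_iff_integrable_sq hmeas.aestronglyMeasurable]
  simpa only [weightedAbs_sq] using hfi

theorem wnorm_eq_integral_weightedAbs_sq (s : ℝ) (f : ℝ → ℂ) :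
    wnorm s f = (∫ x, weightedAbs s f x ^ 2) ^ ((1 : ℝ) / 2) := by
  simp only [wnorm, weightedAbs_sq]

theorem abs_rpow_mul_norm_integral_le {s : ℝ} (hs : 0 ≤ s) (f g : ℝ → ℂ) (ξ : ℝ)
    (hint : Integrable (fun x => weightedAbs s f x * weightedAbs s g (ξ - x))) :
    |ξ| ^ s * ‖∫ x, f x * g (ξ - x)‖ ≤
      2 ^ (s / 2) * ∫ x, weightedAbs s f x * weightedAbs s g (ξ - x) := by
  have hpointwise : ∀ x, |ξ| ^ s * ‖f x * g (ξ - x)‖ ≤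
      2 ^ (s / 2) * (weightedAbs s f x * weightedAbs s g (ξ - x)) := fun x => by
    calc |ξ| ^ s * ‖f x * g (ξ - x)‖
        ≤ 2 ^ (s / 2) * ((1 + x ^ 2) ^ (s / 2) * (1 + (ξ - x) ^ 2) ^ (s / 2)) *
            (‖f x‖ * ‖g (ξ - x)‖) := by
          rw [norm_mul]
          gcongr
          exact abs_rpow_le_two_rpow_mul hs ξ x
      _ = 2 ^ (s / 2) * (weightedAbs s f x * weightedAbs s g (ξ - x)) := by
          simp only [weightedAbs]
          ring
  calc |ξ| ^ s * ‖∫ x, f x * g (ξ - x)‖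
      ≤ |ξ| ^ s * ∫ x, ‖f x * g (ξ - x)‖ := by
        gcongr
        exact norm_integral_le_integral_norm _
    _ = ∫ x, |ξ| ^ s * ‖f x * g (ξ - x)‖ := (integral_const_mul _ _).symm
    _ ≤ ∫ x, 2 ^ (s / 2) * (weightedAbs s f x * weightedAbs s g (ξ - x)) :=
        integral_mono_of_nonneg (Filter.Eventually.of_forall fun x => by positivity)
          (hint.const_mul _) (Filter.Eventually.of_forall hpointwise)
    _ = 2 ^ (s / 2) * ∫ x, weightedAbs s f x * weightedAbs s g (ξ - x) := integral_const_mul _ _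

/-- Bilinear estimate (hs-hs): for `s ≥ 0`,
`sup_ξ |ξ|^s |∫ f(ξ₁) g(ξ−ξ₁) dξ₁| ≲ ‖f‖_{L²_s} ‖g‖_{L²_s}`. -/
theorem convolution_sup_estimate (s : ℝ) (hs : 0 ≤ s) :
    ∃ C > 0, ∀ f g : ℝ → ℂ,
      Measurable f → Measurable g →
      Integrable (fun ξ : ℝ => (1 + ξ ^ 2) ^ s * ‖f ξ‖ ^ 2) →
      Integrable (fun ξ : ℝ => (1 + ξ ^ 2) ^ s * ‖g ξ‖ ^ 2) →
      ∀ ξ : ℝ, |ξ| ^ s * ‖∫ ξ₁ : ℝ, f ξ₁ * g (ξ - ξ₁)‖ ≤ C * wnorm s f * wnorm s g := by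
  refine ⟨2 ^ (s / 2), by positivity, fun f g hf hg hfi hgi ξ => ?_⟩
  have hF := memLp_weightedAbs hf hfi
  have hG := memLp_weightedAbs hg hgi
  have hint := hF.integrable_mul
    (hG.comp_measurePreserving (Measure.measurePreserving_sub_left volume ξ))
  calc |ξ| ^ s * ‖∫ ξ₁ : ℝ, f ξ₁ * g (ξ - ξ₁)‖
      ≤ 2 ^ (s / 2) * ∫ x, weightedAbs s f x * weightedAbs s g (ξ - x) :=
        abs_rpow_mul_norm_integral_le hs f g ξ hint
    _ ≤ 2 ^ (s / 2) * (wnorm s f * wnorm s g) := by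
        rw [wnorm_eq_integral_weightedAbs_sq, wnorm_eq_integral_weightedAbs_sq]
        gcongr
        exact integral_mul_sub_le_of_nonneg (weightedAbs_nonneg s f) (weightedAbs_nonneg s g)
          hF hG ξ
    _ = 2 ^ (s / 2) * wnorm s f * wnorm s g := (mul_assoc _ _ _).symm
end

section
/- For every β ∈ ℝ there exist ε ∈ (0, 1), K ≥ 1, and C > 0 (depending only on β) such that for all α ∈ ℝ, all M ≥ 1, and all ξ ∈ ℝ with |ξ| ≥ K, the Lebesgue measure of the set { ξ₁ ∈ ℝ : max(|ξ − ξ₁|, 1) ≤ ε|ξ| and |Φ_β(ξ, ξ₁, ξ − ξ₁) − α| ≤ M } is at most C · M / ξ⁴. -/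
/-!
On the fibre `ξ₂ = ξ - ξ₁` the modulation `t ↦ Φ_β(ξ, t, ξ - t)` has derivative
`(t² - (ξ - t)²) (5 (t² + (ξ - t)²) + 3β)`. When `|ξ - t| ≤ |ξ|/4` the first factor is at least
`ξ²/2`, and once `ξ² ≥ 6|β|` the second is at least `2ξ²`, so the fibre map grows at rate at
least `ξ⁴` there. A function growing at rate `c` spends a set of diameter at most `2M/c` in any
window `[α - M, α + M]`, and on the line the measure of a set is bounded by its diameter.
-/

open MeasureTheory

theorem Real.volume_sublevel_le_of_mul_sub_le {s : Set ℝ} {f : ℝ → ℝ} {c : ℝ} (hc : 0 < c)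
    (hf : ∀ x ∈ s, ∀ y ∈ s, x ≤ y → c * (y - x) ≤ f y - f x) (α M : ℝ) :
    volume {x ∈ s | |f x - α| ≤ M} ≤ ENNReal.ofReal (2 * M / c) := by
  have hdist : ∀ x ∈ {x ∈ s | |f x - α| ≤ M}, ∀ y ∈ {x ∈ s | |f x - α| ≤ M},
      x ≤ y → y - x ≤ 2 * M / c := by
    rintro x ⟨hxs, hx⟩ y ⟨hys, hy⟩ hxy
    rw [le_div_iff₀ hc]
    linarith [hf x hxs y hys hxy, (abs_le.mp hx).1, (abs_le.mp hy).2]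
  refine (Real.volume_le_diam _).trans (Metric.ediam_le fun x hx y hy => ?_)
  rw [edist_dist, Real.dist_eq]
  refine ENNReal.ofReal_le_ofReal ?_
  rcases le_total x y with hxy | hyx
  · rw [abs_sub_comm, abs_of_nonneg (sub_nonneg.mpr hxy)]
    exact hdist x hx y hy hxy
  · rw [abs_of_nonneg (sub_nonneg.mpr hyx)]
    exact hdist y hy x hx hyx

theorem Convex.volume_sublevel_le_of_le_deriv {s : Set ℝ} (hs : Convex ℝ s) {f f' : ℝ → ℝ}
    {c : ℝ} (hc : 0 < c) (hf : ∀ x ∈ s, HasDerivAt f (f' x) x) (hf' : ∀ x ∈ s, c ≤ f' x)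
    (α M : ℝ) : volume {x ∈ s | |f x - α| ≤ M} ≤ ENNReal.ofReal (2 * M / c) := by
  refine Real.volume_sublevel_le_of_mul_sub_le hc ?_ α M
  refine hs.mul_sub_le_image_sub_of_le_deriv
    (fun x hx => (hf x hx).continuousAt.continuousWithinAt)
    (fun x hx => (hf x (interior_subset hx)).differentiableAt.differentiableWithinAt)
    (fun x hx => ?_)
  rw [(hf x (interior_subset hx)).deriv]
  exact hf' x (interior_subset hx)

theorem hasDerivAt_Phi_fibre (β ξ t : ℝ) :
    HasDerivAt (fun s => Phi β ξ s (ξ - s))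
      ((t ^ 2 - (ξ - t) ^ 2) * (5 * (t ^ 2 + (ξ - t) ^ 2) + 3 * β)) t := by
  have hsub : HasDerivAt (fun s : ℝ => ξ - s) (-1) t := by
    simpa using (hasDerivAt_id t).const_sub ξ
  refine ((((hasDerivAt_pow 5 t).add (hsub.pow 5)).sub_const (ξ ^ 5)).add
    ((((hasDerivAt_pow 3 t).add (hsub.pow 3)).sub_const (ξ ^ 3)).const_mul β)).congr_deriv ?_
  push_cast
  ring

theorem le_deriv_Phi_fibre {β ξ t : ℝ} (hβ : 6 * |β| ≤ ξ ^ 2) (ht : |ξ - t| ≤ |ξ| / 4) :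
    ξ ^ 4 ≤ (t ^ 2 - (ξ - t) ^ 2) * (5 * (t ^ 2 + (ξ - t) ^ 2) + 3 * β) := by
  have hu : 16 * (ξ - t) ^ 2 ≤ ξ ^ 2 := by
    rw [← sq_abs (ξ - t), ← sq_abs ξ]
    nlinarith [abs_nonneg (ξ - t)]
  have hdiff : ξ ^ 2 / 2 ≤ t ^ 2 - (ξ - t) ^ 2 := by
    nlinarith [sq_nonneg (ξ - 4 * (ξ - t))]
  have hsum : 2 * ξ ^ 2 ≤ 5 * (t ^ 2 + (ξ - t) ^ 2) + 3 * β := by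
    nlinarith [neg_abs_le β, sq_nonneg (ξ - t)]
  calc ξ ^ 4 = ξ ^ 2 / 2 * (2 * ξ ^ 2) := by ring
    _ ≤ _ := mul_le_mul hdiff hsum (by positivity) (by linarith [sq_nonneg ξ])

/-- Sublevel-set measure bound in the regime `max{|ξ₂|, 1} ≪ |ξ|`: for `|ξ|` large, the set of
`ξ₁` with `max(|ξ − ξ₁|, 1) ≤ ε|ξ|` and `|Φ_β(ξ, ξ₁, ξ − ξ₁) − α| ≤ M` has measure `≲ M/ξ⁴`. -/
theorem kawahara_sublevel_measure_case2 (β : ℝ) :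
    ∃ ε ∈ Set.Ioo (0 : ℝ) 1, ∃ K : ℝ, 1 ≤ K ∧ ∃ C > 0,
      ∀ (α M ξ : ℝ), 1 ≤ M → K ≤ |ξ| →
        (volume {ξ₁ : ℝ | max |ξ - ξ₁| 1 ≤ ε * |ξ| ∧ |Phi β ξ ξ₁ (ξ - ξ₁) - α| ≤ M}).toReal
          ≤ C * M / ξ ^ 4 := by
  refine ⟨1 / 4, ⟨by norm_num, by norm_num⟩, 1 + 3 * |β|, by linarith [abs_nonneg β], 2,
    two_pos, fun α M ξ hM hK => ?_⟩
  have hξ : 1 ≤ |ξ| := le_trans (by linarith [abs_nonneg β]) hK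
  have hξ0 : ξ ≠ 0 := abs_pos.mp (by linarith)
  have hξ4 : 0 < ξ ^ 4 := by positivity
  have hβ : 6 * |β| ≤ ξ ^ 2 := by
    rw [← sq_abs]
    nlinarith [abs_nonneg β]
  have hsub : {ξ₁ : ℝ | max |ξ - ξ₁| 1 ≤ 1 / 4 * |ξ| ∧ |Phi β ξ ξ₁ (ξ - ξ₁) - α| ≤ M} ⊆
      {t ∈ Metric.closedBall ξ (|ξ| / 4) | |Phi β ξ t (ξ - t) - α| ≤ M} := by
    rintro t ⟨ht, hΦ⟩
    refine ⟨?_, hΦ⟩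
    rw [Metric.mem_closedBall, Real.dist_eq, abs_sub_comm]
    linarith [le_max_left |ξ - t| 1]
  have hvol := (measure_mono hsub).trans
    ((convex_closedBall ξ (|ξ| / 4)).volume_sublevel_le_of_le_deriv hξ4
      (fun t _ => hasDerivAt_Phi_fibre β ξ t)
      (fun t ht => le_deriv_Phi_fibre hβ (by rwa [← Real.dist_eq, dist_comm])) α M)
  exact ENNReal.toReal_le_of_le_ofReal (by positivity) hvol
end

section
/- For every β ∈ ℝ there exist c ∈ (0, 1), K ≥ 1, and C > 0 (depending only on β) such that for all α ∈ ℝ, all M ≥ 1, and all ξ₂ ∈ ℝ with |ξ₂| ≥ K, the Lebesgue measure of the set { ξ₁ ∈ ℝ : c|ξ₂| ≤ |ξ₁| ≤ |ξ₂|/c, |ξ₁ + ξ₂| ≥ K, |2ξ₁ + ξ₂| ≥ (3/2)|ξ₁ + ξ₂|, and |Φ_β(ξ₁ + ξ₂, ξ₁, ξ₂) − α| ≤ M } is at most C · M / |ξ₂|³. -/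
open MeasureTheory

/-!
Along the line `ξ = ξ₁ + ξ₂` the modulation has derivative
`∂Φ/∂ξ₁ = -ξ₂ (2ξ₁ + ξ₂) (5/2 ((2ξ₁ + ξ₂)² + ξ₂²) + 3β)`, whose only critical point for
`ξ₂² ≥ 6|β|` is `ξ₁ = -ξ₂/2`. The conditions `|ξ₁ + ξ₂| ≥ K ≥ 1` and
`|2ξ₁ + ξ₂| ≥ 3/2 |ξ₁ + ξ₂|` keep `ξ₁` away from it, so that `|∂Φ/∂ξ₁| ≥ 3|ξ₂|³` there. By the
mean value theorem, a sublevel set `|Φ - α| ≤ M` then has diameter at most `2M / (3|ξ₂|³)` on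
each side of `-ξ₂/2`, and the Lebesgue measure of a set of reals is bounded by its diameter.
-/

open Set

section DerivBoundedBelow

variable {f f' : ℝ → ℝ} {D : Set ℝ} {δ : ℝ}

theorem Set.OrdConnected.mul_abs_sub_le_abs_sub_of_le_abs_deriv (hD : D.OrdConnected)
    (hf : ∀ t ∈ D, HasDerivAt f (f' t) t) (hf' : ∀ t ∈ D, δ ≤ |f' t|) {x y : ℝ}
    (hx : x ∈ D) (hy : y ∈ D) :
    δ * |y - x| ≤ |f y - f x| := by
  wlog hxy : x < y generalizing x y
  · rcases (not_lt.1 hxy).eq_or_lt with rfl | hyx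
    · simp
    · simpa only [abs_sub_comm] using this hy hx hyx
  have hIcc : Icc x y ⊆ D := hD.out hx hy
  obtain ⟨c, hc, hslope⟩ := exists_hasDerivAt_eq_slope f f' hxy
    (fun t ht => (hf t (hIcc ht)).continuousAt.continuousWithinAt)
    (fun t ht => hf t (hIcc (Ioo_subset_Icc_self ht)))
  have hyx : 0 < y - x := sub_pos.2 hxy
  rw [eq_div_iff hyx.ne'] at hslope
  rw [← hslope, abs_mul, abs_of_pos hyx]
  exact mul_le_mul_of_nonneg_right (hf' c (hIcc (Ioo_subset_Icc_self hc))) hyx.le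

theorem Set.OrdConnected.volume_sublevel_le_of_le_abs_deriv (hD : D.OrdConnected)
    (hf : ∀ t ∈ D, HasDerivAt f (f' t) t) (hδ : 0 < δ) (hf' : ∀ t ∈ D, δ ≤ |f' t|) (α M : ℝ) :
    volume {x ∈ D | |f x - α| ≤ M} ≤ ENNReal.ofReal (2 * M / δ) := by
  refine (Real.volume_le_diam _).trans (Metric.ediam_le fun x hx y hy => ?_)
  rw [edist_dist, Real.dist_eq]
  refine ENNReal.ofReal_le_ofReal ((le_div_iff₀ hδ).2 ?_)
  have hxα := abs_le.1 hx.2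
  have hyα := abs_le.1 hy.2
  calc |x - y| * δ = δ * |x - y| := mul_comm _ _
    _ ≤ |f x - f y| := hD.mul_abs_sub_le_abs_sub_of_le_abs_deriv hf hf' hy.1 hx.1
    _ ≤ 2 * M := abs_sub_le_iff.2 ⟨by linarith, by linarith⟩

end DerivBoundedBelow

theorem hasDerivAt_Phi_add_left (β ξ₂ t : ℝ) :
    HasDerivAt (fun s => Phi β (s + ξ₂) s ξ₂)
      (-(ξ₂ * (2 * t + ξ₂) * (5 / 2 * ((2 * t + ξ₂) ^ 2 + ξ₂ ^ 2) + 3 * β))) t := by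
  have hsum := (hasDerivAt_id t).add_const ξ₂
  have h := (((hasDerivAt_pow 5 t).add_const (ξ₂ ^ 5)).sub (hsum.pow 5)).add
    ((((hasDerivAt_pow 3 t).add_const (ξ₂ ^ 3)).sub (hsum.pow 3)).const_mul β)
  unfold Phi
  exact h.congr_deriv (by simp only [id]; push_cast; ring)

theorem three_mul_abs_pow_three_le_abs_deriv_Phi {β ξ₂ t : ℝ} (hβ : 6 * |β| ≤ ξ₂ ^ 2)
    (ht : 3 / 2 ≤ |2 * t + ξ₂|) :
    3 * |ξ₂| ^ 3 ≤ |-(ξ₂ * (2 * t + ξ₂) * (5 / 2 * ((2 * t + ξ₂) ^ 2 + ξ₂ ^ 2) + 3 * β))| := by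
  have hquad : 2 * ξ₂ ^ 2 ≤ 5 / 2 * ((2 * t + ξ₂) ^ 2 + ξ₂ ^ 2) + 3 * β := by
    nlinarith [sq_nonneg (2 * t + ξ₂), neg_abs_le β]
  rw [abs_neg, abs_mul, abs_mul, abs_of_nonneg ((by positivity : 0 ≤ 2 * ξ₂ ^ 2).trans hquad)]
  calc 3 * |ξ₂| ^ 3 = |ξ₂| * (3 / 2) * (2 * ξ₂ ^ 2) := by rw [← sq_abs ξ₂]; ring
    _ ≤ _ := by gcongr

theorem Set.OrdConnected.volume_sublevel_Phi_add_left_le {β ξ₂ : ℝ} (hξ₂ : ξ₂ ≠ 0)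
    (hβ : 6 * |β| ≤ ξ₂ ^ 2) {D : Set ℝ} (hD : D.OrdConnected)
    (hDξ₂ : ∀ t ∈ D, 3 / 2 ≤ |2 * t + ξ₂|) (α M : ℝ) :
    volume {ξ₁ ∈ D | |Phi β (ξ₁ + ξ₂) ξ₁ ξ₂ - α| ≤ M} ≤ ENNReal.ofReal (2 * M / (3 * |ξ₂| ^ 3)) :=
  hD.volume_sublevel_le_of_le_abs_deriv (fun t _ => hasDerivAt_Phi_add_left β ξ₂ t)
    (by positivity) (fun t ht => three_mul_abs_pow_three_le_abs_deriv_Phi hβ (hDξ₂ t ht)) α M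

/-- Sublevel-set measure bound in the regime `1 ≪ |ξ| ≲ |ξ₁| ∼ |ξ₂|`: for `|ξ₂|` large, the set
of `ξ₁` with `c|ξ₂| ≤ |ξ₁| ≤ |ξ₂|/c`, `|ξ₁ + ξ₂| ≥ K`, `|2ξ₁ + ξ₂| ≥ (3/2)|ξ₁ + ξ₂|`, and
`|Φ_β(ξ₁ + ξ₂, ξ₁, ξ₂) − α| ≤ M` has measure `≲ M/|ξ₂|³`. -/
theorem kawahara_sublevel_measure_case3 (β : ℝ) :
    ∃ c ∈ Set.Ioo (0 : ℝ) 1, ∃ K : ℝ, 1 ≤ K ∧ ∃ C > 0,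
      ∀ (α M ξ₂ : ℝ), 1 ≤ M → K ≤ |ξ₂| →
        (volume {ξ₁ : ℝ | c * |ξ₂| ≤ |ξ₁| ∧ |ξ₁| ≤ |ξ₂| / c ∧ K ≤ |ξ₁ + ξ₂| ∧
            (3 / 2) * |ξ₁ + ξ₂| ≤ |2 * ξ₁ + ξ₂| ∧
            |Phi β (ξ₁ + ξ₂) ξ₁ ξ₂ - α| ≤ M}).toReal
          ≤ C * M / |ξ₂| ^ 3 := by
  refine ⟨1 / 2, ⟨by norm_num, by norm_num⟩, 6 * |β| + 1, by linarith [abs_nonneg β], 4 / 3,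
    by norm_num, fun α M ξ₂ hM hK => ?_⟩
  have hξ₂ : ξ₂ ≠ 0 := abs_pos.1 (by linarith [abs_nonneg β])
  have hβ : 6 * |β| ≤ ξ₂ ^ 2 := by nlinarith [sq_abs ξ₂, abs_nonneg β]
  have hsplit : {ξ₁ : ℝ | 1 / 2 * |ξ₂| ≤ |ξ₁| ∧ |ξ₁| ≤ |ξ₂| / (1 / 2) ∧ 6 * |β| + 1 ≤ |ξ₁ + ξ₂| ∧
      (3 / 2) * |ξ₁ + ξ₂| ≤ |2 * ξ₁ + ξ₂| ∧ |Phi β (ξ₁ + ξ₂) ξ₁ ξ₂ - α| ≤ M} ⊆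
      {ξ₁ ∈ Ici ((3 / 2 - ξ₂) / 2) | |Phi β (ξ₁ + ξ₂) ξ₁ ξ₂ - α| ≤ M} ∪
      {ξ₁ ∈ Iic ((-3 / 2 - ξ₂) / 2) | |Phi β (ξ₁ + ξ₂) ξ₁ ξ₂ - α| ≤ M} := by
    rintro ξ₁ ⟨-, -, hsum, hangle, hlevel⟩
    rcases le_abs'.1 (show 3 / 2 ≤ |2 * ξ₁ + ξ₂| by nlinarith [abs_nonneg β]) with h | h
    · exact Or.inr ⟨by rw [mem_Iic]; linarith, hlevel⟩
    · exact Or.inl ⟨by rw [mem_Ici]; linarith, hlevel⟩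
  have hvol := (measure_mono hsplit).trans ((measure_union_le _ _).trans (add_le_add
    (ordConnected_Ici.volume_sublevel_Phi_add_left_le hξ₂ hβ
      (fun t ht => le_abs.2 (Or.inl (by linarith [mem_Ici.1 ht]))) α M)
    (ordConnected_Iic.volume_sublevel_Phi_add_left_le hξ₂ hβ
      (fun t ht => le_abs.2 (Or.inr (by linarith [mem_Iic.1 ht]))) α M)))
  rw [← ENNReal.ofReal_add (by positivity) (by positivity)] at hvol
  refine ENNReal.toReal_le_of_le_ofReal (by positivity) (hvol.trans (ENNReal.ofReal_le_ofReal ?_))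
  exact le_of_eq (by ring)
end

section
/- For every β ∈ ℝ there exist ρ > 0, K ≥ 1, and C > 0 (depending only on β) such that for all α ∈ ℝ, all M ≥ 1, and all ξ₂ ∈ ℝ with |ξ₂| ≥ K, the Lebesgue measure of the set { ξ₁ ∈ ℝ : |ξ₁ + ξ₂| ≤ ρ and |Φ_β(ξ₁ + ξ₂, ξ₁, ξ₂) − α| ≤ M } is at most C · M / ξ₂⁴. -/
open MeasureTheory

theorem volume_setOf_abs_sub_le_le_of_le_hasDerivAt {D : Set ℝ} (hD : Convex ℝ D)
    {f f' : ℝ → ℝ} (hf : ∀ x ∈ D, HasDerivAt f (f' x) x) {c : ℝ} (hc : 0 < c)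
    (hcf' : ∀ x ∈ D, c ≤ f' x) (α M : ℝ) :
    volume {x | x ∈ D ∧ |f x - α| ≤ M} ≤ ENNReal.ofReal (2 * M / c) := by
  have hmono : ∀ x ∈ D, ∀ y ∈ D, x ≤ y → c * (y - x) ≤ f y - f x :=
    hD.mul_sub_le_image_sub_of_le_deriv
      (fun x hx => (hf x hx).continuousAt.continuousWithinAt)
      (fun x hx => (hf x (interior_subset hx)).differentiableAt.differentiableWithinAt)
      (fun x hx => (hf x (interior_subset hx)).deriv ▸ hcf' x (interior_subset hx))
  refine (Real.volume_le_diam _).trans (Metric.ediam_le fun x ⟨hxD, hx⟩ y ⟨hyD, hy⟩ => ?_)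
  rw [edist_dist, Real.dist_eq]
  refine ENNReal.ofReal_le_ofReal ((le_div_iff₀ hc).2 ?_)
  rw [abs_le] at hx hy
  rcases le_total x y with hxy | hyx
  · nlinarith [abs_of_nonpos (sub_nonpos.2 hxy), hmono x hxD y hyD hxy]
  · nlinarith [abs_of_nonneg (sub_nonneg.2 hyx), hmono y hyD x hxD hyx]

theorem hasDerivAt_Phi_add_right (β ξ₂ x : ℝ) :
    HasDerivAt (fun x => Phi β (x + ξ₂) x ξ₂)
      (5 * x ^ 4 - 5 * (x + ξ₂) ^ 4 + β * (3 * x ^ 2 - 3 * (x + ξ₂) ^ 2)) x := by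
  have h := (hasDerivAt_id x).add_const ξ₂
  exact ((((hasDerivAt_pow 5 x).add_const (ξ₂ ^ 5)).sub (h.pow 5)).add
    ((((hasDerivAt_pow 3 x).add_const (ξ₂ ^ 3)).sub (h.pow 3)).const_mul β)).congr_deriv
    (by norm_num)

theorem pow_four_add_le_five_mul_pow_four {b t u : ℝ} (hb : 0 ≤ b) (ht : 10 * (1 + b) ≤ t)
    (hu : t ≤ u + 1) :
    t ^ 4 + 3 * b * u ^ 2 + 3 * b + 5 ≤ 5 * u ^ 4 := by
  have hu9 : 9 ≤ u := by linarith
  have ht4 : t ^ 4 ≤ (u + 1) ^ 4 := pow_le_pow_left₀ (by linarith) hu 4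
  have hu4 : (u + 1) ^ 4 ≤ 2 * u ^ 4 := by
    nlinarith [mul_nonneg (sub_nonneg.2 hu9) (pow_nonneg (by linarith : (0:ℝ) ≤ u) 3)]
  have hbu2 : 3 * b * u ^ 2 ≤ u ^ 3 := by nlinarith [sq_nonneg u]
  nlinarith [pow_le_pow_left₀ (by norm_num) hu9 3]

theorem le_deriv_Phi_add_right {β ξ₁ ξ₂ : ℝ} (hK : 10 * (1 + |β|) ≤ |ξ₂|) (hξ : |ξ₁ + ξ₂| ≤ 1) :
    ξ₂ ^ 4 ≤ 5 * ξ₁ ^ 4 - 5 * (ξ₁ + ξ₂) ^ 4 + β * (3 * ξ₁ ^ 2 - 3 * (ξ₁ + ξ₂) ^ 2) := by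
  have hξ₂ : |ξ₂| ≤ |ξ₁| + 1 := by
    calc |ξ₂| = |(ξ₁ + ξ₂) - ξ₁| := by ring_nf
      _ ≤ |ξ₁ + ξ₂| + |ξ₁| := abs_sub _ _
      _ ≤ |ξ₁| + 1 := by linarith
  have hsq : (ξ₁ + ξ₂) ^ 2 ≤ 1 := (sq_le_one_iff_abs_le_one _).2 hξ
  have hquartic := pow_four_add_le_five_mul_pow_four (abs_nonneg β) hK hξ₂
  rw [(by decide : Even 4).pow_abs, (by decide : Even 4).pow_abs, even_two.pow_abs] at hquartic
  nlinarith [mul_le_mul_of_nonneg_right (neg_abs_le β) (sq_nonneg ξ₁),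
    mul_le_mul_of_nonneg_right (le_abs_self β) (sq_nonneg (ξ₁ + ξ₂)),
    mul_le_of_le_one_right (abs_nonneg β) hsq]

/-- Sublevel-set measure bound in the regime `|ξ| ≲ 1 ≪ |ξ₁| ∼ |ξ₂|`: for `|ξ₂|` large, the set
of `ξ₁` with `|ξ₁ + ξ₂| ≤ ρ` and `|Φ_β(ξ₁ + ξ₂, ξ₁, ξ₂) − α| ≤ M` has measure `≲ M/ξ₂⁴`. -/
theorem kawahara_sublevel_measure_case4 (β : ℝ) :
    ∃ ρ > (0 : ℝ), ∃ K : ℝ, 1 ≤ K ∧ ∃ C > 0,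
      ∀ (α M ξ₂ : ℝ), 1 ≤ M → K ≤ |ξ₂| →
        (volume {ξ₁ : ℝ | |ξ₁ + ξ₂| ≤ ρ ∧ |Phi β (ξ₁ + ξ₂) ξ₁ ξ₂ - α| ≤ M}).toReal
          ≤ C * M / ξ₂ ^ 4 := by
  refine ⟨1, one_pos, 10 * (1 + |β|), by linarith [abs_nonneg β], 2, two_pos, ?_⟩
  intro α M ξ₂ hM hK
  have hξ₂ : 0 < ξ₂ ^ 4 := by
    rw [← (by decide : Even 4).pow_abs]
    exact pow_pos (by linarith [abs_nonneg β]) 4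
  have hD : Convex ℝ {ξ₁ : ℝ | |ξ₁ + ξ₂| ≤ 1} := by
    simpa [Metric.closedBall, Real.dist_eq] using convex_closedBall (-ξ₂) 1
  refine ENNReal.toReal_le_of_le_ofReal (by positivity) ?_
  exact volume_setOf_abs_sub_le_le_of_le_hasDerivAt hD
    (fun x _ => hasDerivAt_Phi_add_right β ξ₂ x) hξ₂ (fun x hx => le_deriv_Phi_add_right hK hx) α M
end
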